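/- Let ρ be a d×d density matrix and let U₁,…,U_N (N ≥ 3) be d×d unitary matrices. Then ∑_{s=1}^{N} I_ρ(U_s) ≥ (1/(N−2)) { ∑_{1≤s<t≤N} I_ρ(U_s + U_t) − (1/(N−1)²) [ ∑_{1≤s<t≤N} √( I_ρ(U_s + U_t) ) ]² }. -/

import Mathlib

open Matrix Finset
open scoped ComplexOrder

/-- The positive semidefinite square root, as `Matrix.PosSemidef.sqrt` was defined in Mathlib
(December 2024); it was removed from Mathlib since. -/
noncomputable def Matrix.PosSemidef.sqrt {n 𝕜 : Type*} [Fintype n] [RCLike 𝕜] [DecidableEq n]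
    {A : Matrix n n 𝕜} (hA : A.PosSemidef) : Matrix n n 𝕜 :=
  hA.1.eigenvectorUnitary.1 * diagonal ((↑) ∘ (√·) ∘ hA.1.eigenvalues) *
    (star hA.1.eigenvectorUnitary : Matrix n n 𝕜)

/-- Wigner–Yanase skew information `I_ρ(A) = (1/2) Tr([√ρ, A]† [√ρ, A])` of a matrix `A`
with respect to a positive semidefinite matrix `ρ`, where `√ρ = hρ.sqrt` is the positive
semidefinite square root of `ρ`. -/
noncomputable def skewInfo {d : ℕ} {ρ : Matrix (Fin d) (Fin d) ℂ} (hρ : ρ.PosSemidef)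
    (A : Matrix (Fin d) (Fin d) ℂ) : ℝ :=
  (1 / 2 : ℝ) *
    (((hρ.sqrt * A - A * hρ.sqrt)ᴴ * (hρ.sqrt * A - A * hρ.sqrt)).trace).re

/-!
In the Hilbert–Schmidt norm, `I_ρ(A) = ‖[√ρ, A]‖² / 2`, and `A ↦ [√ρ, A]` is additive, so the
inequality concerns vectors `v_s = [√ρ, U_s]` only. Expanding the squares gives
`∑_{s<t} ‖v_s + v_t‖² = (N - 2) ∑_s ‖v_s‖² + ‖∑_s v_s‖²`, and since
`∑_{s<t} (v_s + v_t) = (N - 1) ∑_s v_s`, the triangle inequality yields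
`(N - 1) ‖∑_s v_s‖ ≤ ∑_{s<t} ‖v_s + v_t‖`; substituting this bound into the identity gives
the inequality.
-/

namespace Finset

variable {α M : Type*} [LinearOrder α] [Fintype α] [LocallyFiniteOrderTop α]
  [LocallyFiniteOrderBot α]

theorem sum_sum_Ioi_add_swap [AddCommGroup M] (f : α → α → M) :
    ∑ i, ∑ j ∈ Ioi i, (f i j + f j i) = ∑ i, ∑ j, f i j - ∑ i, f i i := by
  classical
  calc ∑ i, ∑ j ∈ Ioi i, (f i j + f j i) = ∑ i, ∑ j ∈ {i}ᶜ, f j i := by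
        rw [← sum_sum_Ioi_add_eq_sum_sum_off_diag]
        simp_rw [add_comm]
    _ = ∑ i, (∑ j, f j i - f i i) := by
        refine sum_congr rfl fun i _ => ?_
        rw [eq_sub_iff_add_eq, ← sum_singleton (f · i) i, sum_compl_add_sum]
    _ = ∑ i, ∑ j, f i j - ∑ i, f i i := by rw [sum_sub_distrib, sum_comm]

theorem sum_sum_Ioi_add [AddCommGroup M] (v : α → M) :
    ∑ i, ∑ j ∈ Ioi i, (v i + v j) = Fintype.card α • ∑ i, v i - ∑ i, v i := by
  rw [sum_sum_Ioi_add_swap (fun i _ => v i), sum_comm, sum_const, card_univ]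

end Finset

section PairSums

variable {α E : Type*} [LinearOrder α] [Fintype α] [LocallyFiniteOrderTop α]
  [LocallyFiniteOrderBot α] [NormedAddCommGroup E] [InnerProductSpace ℝ E]

theorem sum_sum_Ioi_norm_add_sq (v : α → E) :
    ∑ i, ∑ j ∈ Ioi i, ‖v i + v j‖ ^ 2
      = ((Fintype.card α : ℝ) - 2) * ∑ i, ‖v i‖ ^ 2 + ‖∑ i, v i‖ ^ 2 := by
  calc ∑ i, ∑ j ∈ Ioi i, ‖v i + v j‖ ^ 2
      = ∑ i, ∑ j ∈ Ioi i,
          ((‖v i‖ ^ 2 + inner ℝ (v i) (v j)) + (‖v j‖ ^ 2 + inner ℝ (v j) (v i))) := by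
        refine sum_congr rfl fun i _ => sum_congr rfl fun j _ => ?_
        rw [norm_add_sq_real, real_inner_comm (v i)]
        ring
    _ = ∑ i, ∑ j, (‖v i‖ ^ 2 + inner ℝ (v i) (v j)) - ∑ i, (‖v i‖ ^ 2 + inner ℝ (v i) (v i)) :=
        sum_sum_Ioi_add_swap fun i j => ‖v i‖ ^ 2 + inner ℝ (v i) (v j)
    _ = ((Fintype.card α : ℝ) - 2) * ∑ i, ‖v i‖ ^ 2 + ‖∑ i, v i‖ ^ 2 := by
        simp only [sum_add_distrib, sum_const, card_univ, nsmul_eq_mul, ← inner_sum, ← sum_inner,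
          real_inner_self_eq_norm_sq, ← mul_sum]
        ring

theorem card_sub_one_mul_norm_sum_le (v : α → E) :
    ((Fintype.card α : ℝ) - 1) * ‖∑ i, v i‖ ≤ ∑ i, ∑ j ∈ Ioi i, ‖v i + v j‖ :=
  calc ((Fintype.card α : ℝ) - 1) * ‖∑ i, v i‖
      ≤ ‖((Fintype.card α : ℝ) - 1) • ∑ i, v i‖ := by
        rw [norm_smul, Real.norm_eq_abs]
        exact mul_le_mul_of_nonneg_right (le_abs_self _) (norm_nonneg _)
    _ = ‖∑ i, ∑ j ∈ Ioi i, (v i + v j)‖ := by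
        rw [sum_sum_Ioi_add, sub_smul, one_smul, Nat.cast_smul_eq_nsmul]
    _ ≤ ∑ i, ∑ j ∈ Ioi i, ‖v i + v j‖ := norm_sum_le_of_le _ fun i _ => norm_sum_le _ _

theorem sum_sum_Ioi_norm_add_sq_sub_le (v : α → E) (hα : 1 < Fintype.card α) :
    ∑ i, ∑ j ∈ Ioi i, ‖v i + v j‖ ^ 2
        - (∑ i, ∑ j ∈ Ioi i, ‖v i + v j‖) ^ 2 / ((Fintype.card α : ℝ) - 1) ^ 2
      ≤ ((Fintype.card α : ℝ) - 2) * ∑ i, ‖v i‖ ^ 2 := by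
  have hpos : (0 : ℝ) < (Fintype.card α : ℝ) - 1 := by
    rw [sub_pos, Nat.one_lt_cast]; exact hα
  have hsum : ‖∑ i, v i‖ ^ 2
      ≤ (∑ i, ∑ j ∈ Ioi i, ‖v i + v j‖) ^ 2 / ((Fintype.card α : ℝ) - 1) ^ 2 := by
    rw [le_div_iff₀ (by positivity), ← mul_pow, mul_comm]
    exact pow_le_pow_left₀ (by positivity) (card_sub_one_mul_norm_sum_le v) 2
  rw [sum_sum_Ioi_norm_add_sq]
  linarith

end PairSums

theorem norm_toLp_uncurry_sq {m n 𝕜 : Type*} [Fintype m] [Fintype n] [RCLike 𝕜]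
    (X : Matrix m n 𝕜) :
    ‖WithLp.toLp 2 (Function.uncurry X)‖ ^ 2 = RCLike.re (Xᴴ * X).trace := by
  simp only [EuclideanSpace.norm_sq_eq, Matrix.trace, Matrix.diag_apply, Matrix.mul_apply,
    Matrix.conjTranspose_apply, RCLike.star_def, RCLike.conj_mul, map_sum, Fintype.sum_prod_type,
    ← RCLike.ofReal_pow, RCLike.ofReal_re]
  exact sum_comm

section SkewInformation

variable {d : ℕ} {ρ : Matrix (Fin d) (Fin d) ℂ} (hρ : ρ.PosSemidef)

theorem skewInfo_eq_half_norm_sq (A : Matrix (Fin d) (Fin d) ℂ) :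
    skewInfo hρ A
      = 2⁻¹ * ‖WithLp.toLp 2 (Function.uncurry (hρ.sqrt * A - A * hρ.sqrt))‖ ^ 2 := by
  rw [skewInfo, norm_toLp_uncurry_sq, RCLike.re_to_complex, one_div]

theorem skewInfo_add_eq_half_norm_sq (A B : Matrix (Fin d) (Fin d) ℂ) :
    skewInfo hρ (A + B)
      = 2⁻¹ * ‖WithLp.toLp 2 (Function.uncurry (hρ.sqrt * A - A * hρ.sqrt))
          + WithLp.toLp 2 (Function.uncurry (hρ.sqrt * B - B * hρ.sqrt))‖ ^ 2 := by
  rw [skewInfo_eq_half_norm_sq, ← WithLp.toLp_add, mul_add, add_mul, add_sub_add_comm]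
  rfl

end SkewInformation

theorem stmt_5_general {d N : ℕ} (hN : 3 ≤ N)
    (ρ : Matrix (Fin d) (Fin d) ℂ) (hρ : ρ.PosSemidef)
    (U : Fin N → Matrix (Fin d) (Fin d) ℂ) :
    ∑ s, skewInfo hρ (U s) ≥
      (1 / ((N : ℝ) - 2)) *
        ((∑ s : Fin N, ∑ t ∈ Finset.Ioi s, skewInfo hρ (U s + U t))
          - (1 / ((N : ℝ) - 1) ^ 2) *
            (∑ s : Fin N, ∑ t ∈ Finset.Ioi s,
              Real.sqrt (skewInfo hρ (U s + U t))) ^ 2) := by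
  set v : Fin N → EuclideanSpace ℂ (Fin d × Fin d) :=
    fun s => WithLp.toLp 2 (Function.uncurry (hρ.sqrt * U s - U s * hρ.sqrt))
  have hI (s : Fin N) : skewInfo hρ (U s) = 2⁻¹ * ‖v s‖ ^ 2 := skewInfo_eq_half_norm_sq hρ _
  have hJ (s t : Fin N) : skewInfo hρ (U s + U t) = 2⁻¹ * ‖v s + v t‖ ^ 2 :=
    skewInfo_add_eq_half_norm_sq hρ _ _
  have hsqrt (s t : Fin N) : √(skewInfo hρ (U s + U t)) = √2⁻¹ * ‖v s + v t‖ := by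
    rw [hJ, Real.sqrt_mul (by norm_num), Real.sqrt_sq (norm_nonneg _)]
  have key := sum_sum_Ioi_norm_add_sq_sub_le v (by rw [Fintype.card_fin]; omega)
  rw [Fintype.card_fin] at key
  simp_rw [hsqrt, hI, hJ, ← mul_sum, mul_pow, Real.sq_sqrt (inv_nonneg.2 zero_le_two)]
  have hN2 : (0 : ℝ) < N - 2 := by
    rw [sub_pos]; exact_mod_cast hN
  rw [ge_iff_le, one_div_mul_eq_div, div_le_iff₀ hN2]
  linear_combination 2⁻¹ * key

theorem stmt_5 {d N : ℕ} (hN : 3 ≤ N)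
    (ρ : Matrix (Fin d) (Fin d) ℂ) (hρ : ρ.PosSemidef) (htr : ρ.trace = 1)
    (U : Fin N → Matrix (Fin d) (Fin d) ℂ)
    (hU : ∀ s, U s ∈ Matrix.unitaryGroup (Fin d) ℂ) :
    ∑ s, skewInfo hρ (U s) ≥
      (1 / ((N : ℝ) - 2)) *
        ((∑ s : Fin N, ∑ t ∈ Finset.Ioi s, skewInfo hρ (U s + U t))
          - (1 / ((N : ℝ) - 1) ^ 2) *
            (∑ s : Fin N, ∑ t ∈ Finset.Ioi s,
              Real.sqrt (skewInfo hρ (U s + U t))) ^ 2) :=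
  stmt_5_general hN ρ hρ U
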